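/- For 0 ≤ t ≤ 2 and all x ≥ 0, the polynomial e_t^C evaluated at (x,1,1) equals x(x-1)²(x-t)² ≥ 0, and evaluated at (0,x,1) equals (x-1)²(x+1)((x-1)²+(2-t)x) ≥ 0; where e_t^C := s₀ - (t+1)s₁ + t·s₂ + (t+1)²s₃ with s₀ = S₅ - U·S_{1,1}, s₁ = T_{4,1} - 2U·S_{1,1}, s₂ = T_{3,2} - 2U·S_{1,1}, s₃ = U·S₂ - U·S_{1,1}, S₅ = a⁵+b⁵+c⁵, T_{4,1} = Σ a⁴b+ab⁴ (cyclic), T_{3,2} = Σ a³b²+a²b³ (cyclic), S₂ = a²+b²+c², S_{1,1} = ab+bc+ca, U = abc. -/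
import Mathlib

/-- Quintic symmetric basis forms in three variables. -/
def s0 (a b c : ℝ) : ℝ := (a^5 + b^5 + c^5) - a*b*c*(a*b + b*c + c*a)
def s1 (a b c : ℝ) : ℝ :=
  (a^4*b + a*b^4 + b^4*c + b*c^4 + c^4*a + c*a^4) - 2*a*b*c*(a*b + b*c + c*a)
def s2 (a b c : ℝ) : ℝ :=
  (a^3*b^2 + a^2*b^3 + b^3*c^2 + b^2*c^3 + c^3*a^2 + c^2*a^3) - 2*a*b*c*(a*b + b*c + c*a)
def s3 (a b c : ℝ) : ℝ := a*b*c*(a^2 + b^2 + c^2) - a*b*c*(a*b + b*c + c*a)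
def s4 (a b c : ℝ) : ℝ := a*b*c*(a*b + b*c + c*a)

/-- The extremal quintic `e_t^C = s₀ - (t+1)s₁ + t·s₂ + (t+1)²s₃`. -/
def eC (t a b c : ℝ) : ℝ := s0 a b c - (t+1) * s1 a b c + t * s2 a b c + (t+1)^2 * s3 a b c

theorem eC_evals_nonneg (t : ℝ) (ht0 : 0 ≤ t) (ht2 : t ≤ 2) (x : ℝ) (hx : 0 ≤ x) :
    eC t x 1 1 = x*(x-1)^2*(x-t)^2 ∧ 0 ≤ x*(x-1)^2*(x-t)^2 ∧
    eC t 0 x 1 = (x-1)^2*(x+1)*((x-1)^2 + (2-t)*x) ∧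
    0 ≤ (x-1)^2*(x+1)*((x-1)^2 + (2-t)*x) := by
  refine ⟨by simp only [eC, s0, s1, s2, s3]; ring, ?_, by simp only [eC, s0, s1, s2, s3]; ring, ?_⟩
  · positivity
  · have h1 : (0:ℝ) ≤ (2-t)*x := by nlinarith
    positivity
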